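/- arXiv:1109.5229 — 3 statements merged into one kernel-verified Lean document; each statement's English description precedes it below -/
import Mathlib

section
/- Weak duality for the SDP relaxation of OPF with quadratic costs: let Y be an n×n complex matrix, and for each i let E_i be the single-entry matrix with 1 in position (i,i) and A_i := (1/2)(Yᴴ·E_i + E_i·Y). Let c₁, c₂ : Fin n → ℝ with c₂ ≥ 0, and V̲, V̄ : Fin n → ℝ. Let W be an n×n complex positive semidefinite matrix with V̲_i² ≤ Re(W_{ii}) ≤ V̄_i² for all i, and set P_i := Re(Tr(A_i·W)). Let λ̄, λ̲ : Fin n → ℝ be nonnegative, let z, u : Fin n → ℝ satisfy z_i² ≤ u_i for all i, and suppose the matrix Σ_i (c₁_i − 2·√(c₂_i)·z_i)·A_i + Λ is positive semidefinite, where Λ := diag(λ̄ − λ̲). Then Σ_i (−λ̄_i·V̄_i² + λ̲_i·V̲_i² − u_i) ≤ Σ_i (c₂_i·P_i² + c₁_i·P_i). -/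
open Matrix BigOperators
open scoped ComplexOrder

/- Proof idea: since the dual matrix `M := Σ i (c₁ i − 2√(c₂ i)·z i)·A i + Λ` and `W` are both
positive semidefinite, `Re Tr (M W) ≥ 0`. Expanding the trace, this is a sum over the buses of
`(c₁ i − 2√(c₂ i)·z i)·P i + (λ̄ i − λ̲ i)·W i i`, and bus by bus the dual objective plus this term
is at most the cost, because `c₂ i·P i² + 2√(c₂ i)·z i·P i + u i ≥ (√(c₂ i)·P i + z i)² ≥ 0` and the
voltage bounds make `λ̄ i·(V̄ i² − W i i)` and `λ̲ i·(W i i − V̲ i²)` nonnegative. -/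

namespace Matrix

variable {ι κ R : Type*} [Fintype ι]

/-- `Tr (A B) = 1ᴴ (A ⊙ Bᵀ) 1`, so this is the Schur product theorem. -/
theorem PosSemidef.trace_mul_nonneg {𝕜 : Type*} [RCLike 𝕜] {A B : Matrix ι ι 𝕜}
    (hA : A.PosSemidef) (hB : B.PosSemidef) : 0 ≤ (A * B).trace := by
  have h := (hA.hadamard hB.transpose).dotProduct_mulVec_nonneg (fun _ => 1)
  simpa [trace, mul_apply, dotProduct, mulVec] using h

theorem trace_sum_smul_add_diagonal_mul [CommSemiring R] [Fintype κ] [DecidableEq ι]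
    (a : κ → R) (A : κ → Matrix ι ι R) (d : ι → R) (W : Matrix ι ι R) :
    ((∑ k, a k • A k + diagonal d) * W).trace
      = ∑ k, a k * (A k * W).trace + ∑ i, d i * W i i := by
  simp only [add_mul, trace_add, Finset.sum_mul, trace_sum, smul_mul, trace_smul, smul_eq_mul]
  simp [trace, diagonal_mul]

end Matrix

theorem lagrangian_term_le_quadratic_cost {c₁ c₂ P w lo hi lamU lamL z u : ℝ} (hc₂ : 0 ≤ c₂)
    (hlo : lo ^ 2 ≤ w) (hhi : w ≤ hi ^ 2) (hlamU : 0 ≤ lamU) (hlamL : 0 ≤ lamL)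
    (hzu : z ^ 2 ≤ u) :
    -lamU * hi ^ 2 + lamL * lo ^ 2 - u + ((c₁ - 2 * √c₂ * z) * P + (lamU - lamL) * w)
      ≤ c₂ * P ^ 2 + c₁ * P := by
  have hsq : 0 ≤ (√c₂ * P + z) ^ 2 := sq_nonneg _
  have hU : 0 ≤ lamU * (hi ^ 2 - w) := mul_nonneg hlamU (sub_nonneg.mpr hhi)
  have hL : 0 ≤ lamL * (w - lo ^ 2) := mul_nonneg hlamL (sub_nonneg.mpr hlo)
  nlinarith [Real.sq_sqrt hc₂]

theorem weak_duality_sdp_opf_quadratic_general (n : ℕ)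
    (A : Fin n → Matrix (Fin n) (Fin n) ℂ)
    (c₁ c₂ : Fin n → ℝ) (hc₂ : ∀ i, 0 ≤ c₂ i)
    (Vlo Vhi : Fin n → ℝ)
    (W : Matrix (Fin n) (Fin n) ℂ) (hW : W.PosSemidef)
    (hWdiag : ∀ i, Vlo i ^ 2 ≤ (W i i).re ∧ (W i i).re ≤ Vhi i ^ 2)
    (P : Fin n → ℝ) (hP : ∀ i, P i = (((A i) * W).trace).re)
    (lamU lamL : Fin n → ℝ) (hlamU : ∀ i, 0 ≤ lamU i) (hlamL : ∀ i, 0 ≤ lamL i)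
    (z u : Fin n → ℝ) (hzu : ∀ i, z i ^ 2 ≤ u i)
    (Λ : Matrix (Fin n) (Fin n) ℂ)
    (hΛ : Λ = Matrix.diagonal fun i => ((lamU i - lamL i : ℝ) : ℂ))
    (hdual : (∑ i, (((c₁ i - 2 * Real.sqrt (c₂ i) * z i : ℝ) : ℂ) • A i) + Λ).PosSemidef) :
    ∑ i, (-(lamU i) * Vhi i ^ 2 + lamL i * Vlo i ^ 2 - u i)
      ≤ ∑ i, (c₂ i * P i ^ 2 + c₁ i * P i) := by
  have htrace := (Complex.nonneg_iff.mp (hdual.trace_mul_nonneg hW)).1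
  rw [hΛ, trace_sum_smul_add_diagonal_mul] at htrace
  simp only [Complex.add_re, Complex.re_sum, Complex.re_ofReal_mul, ← hP] at htrace
  calc ∑ i, (-(lamU i) * Vhi i ^ 2 + lamL i * Vlo i ^ 2 - u i)
      ≤ ∑ i, (-(lamU i) * Vhi i ^ 2 + lamL i * Vlo i ^ 2 - u i)
          + (∑ i, (c₁ i - 2 * √(c₂ i) * z i) * P i + ∑ i, (lamU i - lamL i) * (W i i).re) := by
        linarith
    _ ≤ ∑ i, (c₂ i * P i ^ 2 + c₁ i * P i) := by
        rw [← Finset.sum_add_distrib, ← Finset.sum_add_distrib]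
        exact Finset.sum_le_sum fun i _ => lagrangian_term_le_quadratic_cost (hc₂ i)
          (hWdiag i).1 (hWdiag i).2 (hlamU i) (hlamL i) (hzu i)

/-- Weak duality for the SDP relaxation of OPF with quadratic
costs: with `A i := (1/2)(Yᴴ·E i + E i·Y)`, `P i := Re (Tr (A i * W))`, dual
variables `λ̄, λ̲ ≥ 0`, `z, u` with `z i ^ 2 ≤ u i`, and
`Σ i (c₁ i − 2√(c₂ i)·z i)·A i + Λ ⪰ 0` where `Λ := diag (λ̄ − λ̲)`, one has
`Σ i (−λ̄ i·V̄ i² + λ̲ i·V̲ i² − u i) ≤ Σ i (c₂ i·(P i)² + c₁ i·P i)`. -/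
theorem weak_duality_sdp_opf_quadratic (n : ℕ) (hn : 0 < n)
    (Y : Matrix (Fin n) (Fin n) ℂ)
    (E : Fin n → Matrix (Fin n) (Fin n) ℂ)
    (hE : ∀ i, E i = Matrix.single i i 1)
    (A : Fin n → Matrix (Fin n) (Fin n) ℂ)
    (hA : ∀ i, A i = (1/2 : ℂ) • (Yᴴ * E i + E i * Y))
    (c₁ c₂ : Fin n → ℝ) (hc₂ : ∀ i, 0 ≤ c₂ i)
    (Vlo Vhi : Fin n → ℝ)
    (W : Matrix (Fin n) (Fin n) ℂ) (hW : W.PosSemidef)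
    (hWdiag : ∀ i, Vlo i ^ 2 ≤ (W i i).re ∧ (W i i).re ≤ Vhi i ^ 2)
    (P : Fin n → ℝ) (hP : ∀ i, P i = (((A i) * W).trace).re)
    (lamU lamL : Fin n → ℝ) (hlamU : ∀ i, 0 ≤ lamU i) (hlamL : ∀ i, 0 ≤ lamL i)
    (z u : Fin n → ℝ) (hzu : ∀ i, z i ^ 2 ≤ u i)
    (Λ : Matrix (Fin n) (Fin n) ℂ)
    (hΛ : Λ = Matrix.diagonal fun i => ((lamU i - lamL i : ℝ) : ℂ))
    (hdual : (∑ i, (((c₁ i - 2 * Real.sqrt (c₂ i) * z i : ℝ) : ℂ) • A i) + Λ).PosSemidef) :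
    ∑ i, (-(lamU i) * Vhi i ^ 2 + lamL i * Vlo i ^ 2 - u i)
      ≤ ∑ i, (c₂ i * P i ^ 2 + c₁ i * P i) :=
  weak_duality_sdp_opf_quadratic_general n A c₁ c₂ hc₂ Vlo Vhi W hW hWdiag P hP lamU lamL hlamU
    hlamL z u hzu Λ hΛ hdual
end

section
/- Convexity of the subproblem value function in the shared variables: let M be an n×n Hermitian complex matrix, V̲, V̄ : Fin n → ℝ, and let S be a finite set of index pairs (the shared positions). For x : S → ℂ define the feasible set F(x) := { W : W is n×n complex positive semidefinite, V̲_i² ≤ Re(W_{ii}) ≤ V̄_i² for all i, and W_{p} = x(p) for all p ∈ S }, and define φ(x) := sInf { Re(Tr(M·W)) : W ∈ F(x) }. Then: (a) for every x with F(x) nonempty, the set { Re(Tr(M·W)) : W ∈ F(x) } is bounded below; and (b) for all x₁, x₂ with F(x₁) and F(x₂) nonempty and all t ∈ [0,1], F(t·x₁ + (1−t)·x₂) is nonempty and φ(t·x₁ + (1−t)·x₂) ≤ t·φ(x₁) + (1−t)·φ(x₂). -/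
open Matrix BigOperators
open scoped ComplexOrder

/-! The constraints defining `F x` are jointly convex in `(x, W)` and the objective is real-linear
in `W`, so minimising it over `W` leaves a convex function of `x`. Boundedness below holds
because a positive semidefinite `W` satisfies `‖W i j‖ ≤ √(W i i) √(W j j)`, so the upper
diagonal bounds bound every entry. -/

namespace Matrix

variable {ι 𝕜 : Type*} [Fintype ι] [RCLike 𝕜]

theorem PosSemidef.norm_apply_le_sqrt_mul_sqrt {A : Matrix ι ι 𝕜} (hA : A.PosSemidef) (i j : ι) :
    ‖A i j‖ ≤ √(RCLike.re (A i i)) * √(RCLike.re (A j j)) := by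
  classical
  open scoped MatrixOrder Matrix.Norms.L2Operator in
  obtain ⟨B, rfl⟩ := CStarAlgebra.nonneg_iff_eq_star_mul_self.mp hA.nonneg
  let col : ι → EuclideanSpace 𝕜 ι := fun a => WithLp.toLp 2 fun k => B k a
  have hgram : ∀ a b, (star B * B) a b = inner 𝕜 (col a) (col b) := fun a b => by
    simp [col, Matrix.mul_apply, PiLp.inner_apply, mul_comm]
  have hnorm : ∀ a, √(RCLike.re ((star B * B) a a)) = ‖col a‖ := fun a => by
    rw [hgram, inner_self_eq_norm_sq, Real.sqrt_sq (norm_nonneg _)]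
  rw [hnorm, hnorm, hgram]
  exact norm_inner_le_norm _ _

theorem norm_trace_mul_le (M W : Matrix ι ι 𝕜) :
    ‖(M * W).trace‖ ≤ ∑ i, ∑ j, ‖M i j‖ * ‖W j i‖ := by
  simp only [trace, diag_apply, mul_apply, ← norm_mul]
  exact (norm_sum_le _ _).trans (Finset.sum_le_sum fun i _ => norm_sum_le _ _)

theorem bddBelow_re_trace_mul_image (M : Matrix ι ι 𝕜) (c : ι → ℝ) :
    BddBelow ((fun W => RCLike.re (M * W).trace) ''
      {W : Matrix ι ι 𝕜 | W.PosSemidef ∧ ∀ i, RCLike.re (W i i) ≤ c i}) := by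
  refine ⟨-∑ i, ∑ j, ‖M i j‖ * (√(c j) * √(c i)), ?_⟩
  rintro _ ⟨W, ⟨hW, hc⟩, rfl⟩
  have hentry : ∀ i j, ‖W j i‖ ≤ √(c j) * √(c i) := fun i j =>
    (hW.norm_apply_le_sqrt_mul_sqrt j i).trans <|
      mul_le_mul (Real.sqrt_le_sqrt (hc j)) (Real.sqrt_le_sqrt (hc i)) (Real.sqrt_nonneg _)
        (Real.sqrt_nonneg _)
  calc -∑ i, ∑ j, ‖M i j‖ * (√(c j) * √(c i))
      ≤ -∑ i, ∑ j, ‖M i j‖ * ‖W j i‖ := by gcongr with i _ j _; exact hentry i j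
    _ ≤ -‖(M * W).trace‖ := neg_le_neg (norm_trace_mul_le M W)
    _ ≤ RCLike.re (M * W).trace := neg_le_of_abs_le (RCLike.abs_re_le_norm _)

end Matrix

section ValueFunction

open scoped Pointwise

variable {X E : Type*} [AddCommGroup X] [Module ℝ X] [AddCommGroup E] [Module ℝ E]
  {F : X → Set E}

theorem convex_setOf_nonempty_of_convex_graph (hG : Convex ℝ {p : X × E | p.2 ∈ F p.1}) :
    Convex ℝ {x | (F x).Nonempty} := by
  rintro x₁ ⟨W₁, hW₁⟩ x₂ ⟨W₂, hW₂⟩ a b ha hb hab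
  exact ⟨a • W₁ + b • W₂, hG (x := (x₁, W₁)) hW₁ (y := (x₂, W₂)) hW₂ ha hb hab⟩

theorem convexOn_sInf_image_of_convex_graph (hG : Convex ℝ {p : X × E | p.2 ∈ F p.1})
    (f : E →ₗ[ℝ] ℝ) (hbdd : ∀ x, BddBelow (f '' F x)) :
    ConvexOn ℝ {x | (F x).Nonempty} fun x => sInf (f '' F x) := by
  refine ⟨convex_setOf_nonempty_of_convex_graph hG, ?_⟩
  intro x₁ h₁ x₂ h₂ a b ha hb hab
  have hsub : a • (f '' F x₁) + b • (f '' F x₂) ⊆ f '' F (a • x₁ + b • x₂) := by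
    rintro _ ⟨_, ⟨_, ⟨W₁, hW₁, rfl⟩, rfl⟩, _, ⟨_, ⟨W₂, hW₂, rfl⟩, rfl⟩, rfl⟩
    exact ⟨a • W₁ + b • W₂, hG (x := (x₁, W₁)) hW₁ (y := (x₂, W₂)) hW₂ ha hb hab, by simp⟩
  have hne₁ := (h₁.image f).smul_set (a := a)
  have hne₂ := (h₂.image f).smul_set (a := b)
  calc sInf (f '' F (a • x₁ + b • x₂))
      ≤ sInf (a • (f '' F x₁) + b • (f '' F x₂)) :=
        csInf_le_csInf (hbdd _) (hne₁.add hne₂) hsub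
    _ = a • sInf (f '' F x₁) + b • sInf (f '' F x₂) := by
        rw [csInf_add hne₁ ((hbdd x₁).smul_of_nonneg ha) hne₂ ((hbdd x₂).smul_of_nonneg hb),
          Real.sInf_smul_of_nonneg ha, Real.sInf_smul_of_nonneg hb]

end ValueFunction

section Feasibility

variable {ι 𝕜 : Type*} [RCLike 𝕜]

def sdpFeasibleGraph (lo hi : ι → ℝ) (S : Finset (ι × ι)) : Set ((S → 𝕜) × Matrix ι ι 𝕜) :=
  {p | p.2.PosSemidef ∧ (∀ i, lo i ≤ RCLike.re (p.2 i i) ∧ RCLike.re (p.2 i i) ≤ hi i) ∧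
    ∀ s : S, p.2 s.1.1 s.1.2 = p.1 s}

theorem convex_sdpFeasibleGraph (lo hi : ι → ℝ) (S : Finset (ι × ι)) :
    Convex ℝ (sdpFeasibleGraph (𝕜 := 𝕜) lo hi S) := by
  rintro ⟨x₁, A⟩ ⟨hA, hA_diag, hA_eq⟩ ⟨x₂, B⟩ ⟨hB, hB_diag, hB_eq⟩ a b ha hb hab
  dsimp only at *
  refine ⟨(hA.smul ha).add (hB.smul hb), fun i => ?_, fun s => ?_⟩
  · simpa [Set.mem_Icc, RCLike.smul_re] using
      convex_Icc (lo i) (hi i) (hA_diag i) (hB_diag i) ha hb hab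
  · simp [hA_eq s, hB_eq s]

end Feasibility

theorem subproblem_value_function_convex_general (n : ℕ)
    (M : Matrix (Fin n) (Fin n) ℂ)
    (Vlo Vhi : Fin n → ℝ)
    (S : Finset (Fin n × Fin n))
    (F : (S → ℂ) → Set (Matrix (Fin n) (Fin n) ℂ))
    (hF : ∀ x, F x = {W | W.PosSemidef ∧
        (∀ i, Vlo i ^ 2 ≤ (W i i).re ∧ (W i i).re ≤ Vhi i ^ 2) ∧
        ∀ p : S, W (p : Fin n × Fin n).1 (p : Fin n × Fin n).2 = x p})
    (φ : (S → ℂ) → ℝ)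
    (hφ : ∀ x, φ x = sInf ((fun W => ((M * W).trace).re) '' F x)) :
    (∀ x : S → ℂ, (F x).Nonempty →
        BddBelow ((fun W => ((M * W).trace).re) '' F x)) ∧
    ∀ (x₁ x₂ : S → ℂ), (F x₁).Nonempty → (F x₂).Nonempty →
      ∀ t : ℝ, t ∈ Set.Icc (0 : ℝ) 1 →
        (F (fun p => (t : ℂ) * x₁ p + ((1 - t : ℝ) : ℂ) * x₂ p)).Nonempty ∧
        φ (fun p => (t : ℂ) * x₁ p + ((1 - t : ℝ) : ℂ) * x₂ p)
          ≤ t * φ x₁ + (1 - t) * φ x₂ := by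
  have hbdd : ∀ x, BddBelow ((fun W => ((M * W).trace).re) '' F x) := fun x =>
    (bddBelow_re_trace_mul_image M fun i => Vhi i ^ 2).mono <| Set.image_mono fun W hW => by
      rw [hF] at hW
      exact ⟨hW.1, fun i => (hW.2.1 i).2⟩
  have hgraph :
      {p | p.2 ∈ F p.1} = sdpFeasibleGraph (fun i => Vlo i ^ 2) (fun i => Vhi i ^ 2) S := by
    ext p
    simp [hF, sdpFeasibleGraph]
  have hconv : ConvexOn ℝ {x | (F x).Nonempty} φ := by
    rw [funext hφ]
    exact convexOn_sInf_image_of_convex_graph (hgraph ▸ convex_sdpFeasibleGraph _ _ S)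
      (Complex.reLm ∘ₗ (traceLinearMap _ ℂ ℂ).restrictScalars ℝ ∘ₗ LinearMap.mulLeft ℝ M) hbdd
  refine ⟨fun x _ => hbdd x, fun x₁ x₂ h₁ h₂ t ⟨ht₀, ht₁⟩ => ?_⟩
  have hx : (fun p => (t : ℂ) * x₁ p + ((1 - t : ℝ) : ℂ) * x₂ p) = t • x₁ + (1 - t) • x₂ := by
    ext p
    simp [Complex.real_smul]
  rw [hx]
  exact ⟨hconv.1 h₁ h₂ ht₀ (by linarith) (by ring), hconv.2 h₁ h₂ ht₀ (by linarith) (by ring)⟩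

/-- Convexity of the subproblem value function in the shared
variables: with `F x` the set of SDP-feasible matrices agreeing with `x` on
the shared positions `S`, and `φ x` the infimum of `Re (Tr (M·W))` over
`F x`: (a) for every `x` with `F x` nonempty the objective values are bounded
below, and (b) `F` has convex (nonempty) values along segments and `φ` is
convex. -/
theorem subproblem_value_function_convex (n : ℕ) (hn : 0 < n)
    (M : Matrix (Fin n) (Fin n) ℂ) (hM : M.IsHermitian)
    (Vlo Vhi : Fin n → ℝ)
    (S : Finset (Fin n × Fin n))
    (F : (S → ℂ) → Set (Matrix (Fin n) (Fin n) ℂ))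
    (hF : ∀ x, F x = {W | W.PosSemidef ∧
        (∀ i, Vlo i ^ 2 ≤ (W i i).re ∧ (W i i).re ≤ Vhi i ^ 2) ∧
        ∀ p : S, W (p : Fin n × Fin n).1 (p : Fin n × Fin n).2 = x p})
    (φ : (S → ℂ) → ℝ)
    (hφ : ∀ x, φ x = sInf ((fun W => ((M * W).trace).re) '' F x)) :
    (∀ x : S → ℂ, (F x).Nonempty →
        BddBelow ((fun W => ((M * W).trace).re) '' F x)) ∧
    ∀ (x₁ x₂ : S → ℂ), (F x₁).Nonempty → (F x₂).Nonempty →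
      ∀ t : ℝ, t ∈ Set.Icc (0 : ℝ) 1 →
        (F (fun p => (t : ℂ) * x₁ p + ((1 - t : ℝ) : ℂ) * x₂ p)).Nonempty ∧
        φ (fun p => (t : ℂ) * x₁ p + ((1 - t : ℝ) : ℂ) * x₂ p)
          ≤ t * φ x₁ + (1 - t) * φ x₂ :=
  subproblem_value_function_convex_general n M Vlo Vhi S F hF φ hφ
end

section
/- Concavity of the partially-maximized dual function J(z) in the quadratic-cost algorithm: let Y be an n×n complex matrix, A_i := (1/2)(Yᴴ·E_i + E_i·Y), c₁, c₂ : Fin n → ℝ with c₂ ≥ 0, and V̲, V̄ : Fin n → ℝ. For z : Fin n → ℝ, call (λ̄, λ̲) dual-feasible at z if λ̄, λ̲ : Fin n → ℝ are nonnegative and Σ_i (c₁_i − 2·√(c₂_i)·z_i)·A_i + diag(λ̄ − λ̲) is positive semidefinite, and let g(z, λ̄, λ̲) := Σ_i (−λ̄_i·V̄_i² + λ̲_i·V̲_i² − z_i²) and J(z) := sSup { g(z, λ̄, λ̲) : (λ̄, λ̲) dual-feasible at z }. Then for all z₁, z₂, all (λ̄₁, λ̲₁) dual-feasible at z₁ and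 (λ̄₂, λ̲₂) dual-feasible at z₂, and all t ∈ [0,1]: the pair (t·λ̄₁ + (1−t)·λ̄₂, t·λ̲₁ + (1−t)·λ̲₂) is dual-feasible at z_t := t·z₁ + (1−t)·z₂, and, provided the set { g(z_t, λ̄, λ̲) : (λ̄, λ̲) dual-feasible at z_t } is bounded above, t·g(z₁, λ̄₁, λ̲₁) + (1−t)·g(z₂, λ̄₂, λ̲₂) ≤ J(z_t). -/
open Matrix
open scoped ComplexOrder

/-!
The dual constraint matrix depends affinely on `(z, λ̄, λ̲)` and positive semidefinite matrices
form a convex cone, so the feasible triples form a convex set. The objective `g` is linear in the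
multipliers minus the convex function `∑ zᵢ²`, hence jointly concave; its value at the combined
feasible triple dominates `t • g₁ + (1 - t) • g₂` and is one of the values whose supremum is
`J(z_t)`.
-/

theorem Matrix.convex_setOf_posSemidef {m 𝕜 : Type*} [RCLike 𝕜] :
    Convex ℝ {M : Matrix m m 𝕜 | M.PosSemidef} :=
  fun _ hM _ hN _ _ ha hb _ => (hM.smul ha).add (hN.smul hb)

section DualFeasibility

variable {m ι : Type*} [DecidableEq m] [Fintype ι]

/-- With `a = c₁` and `b = 2 √c₂` this is the matrix of the dual constraint. -/
def dualMatrix (A : ι → Matrix m m ℂ) (a b z : ι → ℝ) (lamU lamL : m → ℝ) : Matrix m m ℂ :=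
  ∑ i, ((a i - b i * z i : ℝ) : ℂ) • A i + diagonal fun j => ((lamU j - lamL j : ℝ) : ℂ)

theorem dualMatrix_convexComb (A : ι → Matrix m m ℂ) (a b : ι → ℝ) {z₁ z₂ : ι → ℝ}
    {u₁ u₂ l₁ l₂ : m → ℝ} {s t : ℝ} (hst : s + t = 1) :
    dualMatrix A a b (s • z₁ + t • z₂) (s • u₁ + t • u₂) (s • l₁ + t • l₂)
      = s • dualMatrix A a b z₁ u₁ l₁ + t • dualMatrix A a b z₂ u₂ l₂ := by
  obtain rfl := eq_sub_of_add_eq hst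
  ext j k
  simp only [dualMatrix, Matrix.add_apply, Matrix.smul_apply, Matrix.sum_apply, diagonal_apply,
    Pi.add_apply, Pi.smul_apply, smul_eq_mul, Complex.real_smul]
  rw [mul_add, mul_add, add_add_add_comm, Finset.mul_sum, Finset.mul_sum,
    ← Finset.sum_add_distrib]
  congr 1
  · refine Finset.sum_congr rfl fun i _ => ?_
    push_cast
    ring
  · split_ifs <;> push_cast <;> ring

def dualFeasibleSet (A : ι → Matrix m m ℂ) (a b : ι → ℝ) :
    Set ((ι → ℝ) × (m → ℝ) × (m → ℝ)) :=
  {p | 0 ≤ p.2.1 ∧ 0 ≤ p.2.2 ∧ (dualMatrix A a b p.1 p.2.1 p.2.2).PosSemidef}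

theorem convex_dualFeasibleSet (A : ι → Matrix m m ℂ) (a b : ι → ℝ) :
    Convex ℝ (dualFeasibleSet A a b) := by
  rintro ⟨z₁, u₁, l₁⟩ ⟨hu₁, hl₁, hM₁⟩ ⟨z₂, u₂, l₂⟩ ⟨hu₂, hl₂, hM₂⟩ s t hs ht hst
  refine ⟨?_, ?_, ?_⟩
  · exact add_nonneg (smul_nonneg hs hu₁) (smul_nonneg ht hu₂)
  · exact add_nonneg (smul_nonneg hs hl₁) (smul_nonneg ht hl₂)
  · change (dualMatrix A a b (s • z₁ + t • z₂) (s • u₁ + t • u₂) (s • l₁ + t • l₂)).PosSemidef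
    rw [dualMatrix_convexComb A a b hst]
    exact convex_setOf_posSemidef hM₁ hM₂ hs ht hst

end DualFeasibility

theorem concaveOn_dualObjective {ι : Type*} [Fintype ι] (Vlo Vhi : ι → ℝ) :
    ConcaveOn ℝ Set.univ fun p : (ι → ℝ) × (ι → ℝ) × (ι → ℝ) =>
      ∑ i, (-(p.2.1 i) * Vhi i ^ 2 + p.2.2 i * Vlo i ^ 2 - p.1 i ^ 2) := by
  refine ⟨convex_univ, fun p _ q _ a b ha hb hab => ?_⟩
  have hsq (x y : ℝ) : (a * x + b * y) ^ 2 ≤ a * x ^ 2 + b * y ^ 2 :=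
    even_two.convexOn_pow.2 trivial trivial ha hb hab
  simp only [smul_eq_mul, Finset.mul_sum, ← Finset.sum_add_distrib]
  refine Finset.sum_le_sum fun i _ => ?_
  simp only [Prod.fst_add, Prod.snd_add, Prod.smul_fst, Prod.smul_snd, Pi.add_apply,
    Pi.smul_apply, smul_eq_mul]
  linear_combination hsq (p.1 i) (q.1 i)

theorem dual_function_J_concave_general (n : ℕ)
    (A : Fin n → Matrix (Fin n) (Fin n) ℂ)
    (c₁ c₂ : Fin n → ℝ)
    (Vlo Vhi : Fin n → ℝ)
    (DF : (Fin n → ℝ) → (Fin n → ℝ) → (Fin n → ℝ) → Prop)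
    (hDF : ∀ z lamU lamL, DF z lamU lamL ↔
        (∀ i, 0 ≤ lamU i) ∧ (∀ i, 0 ≤ lamL i) ∧
        ((∑ i, (((c₁ i - 2 * Real.sqrt (c₂ i) * z i : ℝ) : ℂ) • A i)
            + Matrix.diagonal fun i => ((lamU i - lamL i : ℝ) : ℂ)).PosSemidef))
    (g : (Fin n → ℝ) → (Fin n → ℝ) → (Fin n → ℝ) → ℝ)
    (hg : ∀ z lamU lamL, g z lamU lamL
        = ∑ i, (-(lamU i) * Vhi i ^ 2 + lamL i * Vlo i ^ 2 - z i ^ 2))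
    (J : (Fin n → ℝ) → ℝ)
    (hJ : ∀ z, J z = sSup {r : ℝ | ∃ lamU lamL,
        DF z lamU lamL ∧ r = g z lamU lamL}) :
    ∀ (z₁ z₂ lamU₁ lamL₁ lamU₂ lamL₂ : Fin n → ℝ),
      DF z₁ lamU₁ lamL₁ → DF z₂ lamU₂ lamL₂ →
      ∀ t : ℝ, t ∈ Set.Icc (0 : ℝ) 1 →
        DF (fun i => t * z₁ i + (1 - t) * z₂ i)
          (fun i => t * lamU₁ i + (1 - t) * lamU₂ i)
          (fun i => t * lamL₁ i + (1 - t) * lamL₂ i) ∧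
        (BddAbove {r : ℝ | ∃ lamU lamL,
            DF (fun i => t * z₁ i + (1 - t) * z₂ i) lamU lamL ∧
            r = g (fun i => t * z₁ i + (1 - t) * z₂ i) lamU lamL} →
          t * g z₁ lamU₁ lamL₁ + (1 - t) * g z₂ lamU₂ lamL₂
            ≤ J (fun i => t * z₁ i + (1 - t) * z₂ i)) := by
  intro z₁ z₂ u₁ l₁ u₂ l₂ h₁ h₂ t ⟨ht₀, ht₁⟩
  have hs : 0 ≤ 1 - t := sub_nonneg.2 ht₁
  have hst : t + (1 - t) = 1 := add_sub_cancel t 1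
  have hDF' : ∀ z u l, DF z u l ↔ (z, u, l) ∈ dualFeasibleSet A c₁ fun i => 2 * √(c₂ i) := hDF
  have hcomb : ∀ x y : Fin n → ℝ, t • x + (1 - t) • y = fun i => t * x i + (1 - t) * y i :=
    fun _ _ => rfl
  have hfeas := convex_dualFeasibleSet A _ _ ((hDF' _ _ _).1 h₁) ((hDF' _ _ _).1 h₂) ht₀ hs hst
  rw [Prod.smul_mk, Prod.smul_mk, Prod.smul_mk, Prod.smul_mk, Prod.mk_add_mk, Prod.mk_add_mk,
    hcomb, hcomb, hcomb, ← hDF'] at hfeas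
  refine ⟨hfeas, fun hbdd => ?_⟩
  have hconc := (concaveOn_dualObjective Vlo Vhi).2 trivial trivial ht₀ hs hst
    (x := (z₁, u₁, l₁)) (y := (z₂, u₂, l₂))
  rw [Prod.smul_mk, Prod.smul_mk, Prod.smul_mk, Prod.smul_mk, Prod.mk_add_mk, Prod.mk_add_mk,
    hcomb, hcomb, hcomb, smul_eq_mul, smul_eq_mul] at hconc
  rw [hJ, hg, hg]
  refine le_trans ?_ (le_csSup hbdd ⟨_, _, hfeas, rfl⟩)
  rw [hg]
  exact hconc

/-- Concavity of the partially-maximized dual function `J(z)` in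
the quadratic-cost algorithm: convex combinations of dual-feasible multipliers
are dual-feasible at the convex combination of the `z`'s, and (when the value
set at `z_t` is bounded above) `t·g(z₁,λ̄₁,λ̲₁) + (1−t)·g(z₂,λ̄₂,λ̲₂) ≤ J(z_t)`. -/
theorem dual_function_J_concave (n : ℕ) (hn : 0 < n)
    (Y : Matrix (Fin n) (Fin n) ℂ)
    (E : Fin n → Matrix (Fin n) (Fin n) ℂ)
    (hE : ∀ i, E i = Matrix.single i i 1)
    (A : Fin n → Matrix (Fin n) (Fin n) ℂ)
    (hA : ∀ i, A i = (1/2 : ℂ) • (Yᴴ * E i + E i * Y))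
    (c₁ c₂ : Fin n → ℝ) (hc₂ : ∀ i, 0 ≤ c₂ i)
    (Vlo Vhi : Fin n → ℝ)
    (DF : (Fin n → ℝ) → (Fin n → ℝ) → (Fin n → ℝ) → Prop)
    (hDF : ∀ z lamU lamL, DF z lamU lamL ↔
        (∀ i, 0 ≤ lamU i) ∧ (∀ i, 0 ≤ lamL i) ∧
        ((∑ i, (((c₁ i - 2 * Real.sqrt (c₂ i) * z i : ℝ) : ℂ) • A i)
            + Matrix.diagonal fun i => ((lamU i - lamL i : ℝ) : ℂ)).PosSemidef))
    (g : (Fin n → ℝ) → (Fin n → ℝ) → (Fin n → ℝ) → ℝ)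
    (hg : ∀ z lamU lamL, g z lamU lamL
        = ∑ i, (-(lamU i) * Vhi i ^ 2 + lamL i * Vlo i ^ 2 - z i ^ 2))
    (J : (Fin n → ℝ) → ℝ)
    (hJ : ∀ z, J z = sSup {r : ℝ | ∃ lamU lamL,
        DF z lamU lamL ∧ r = g z lamU lamL}) :
    ∀ (z₁ z₂ lamU₁ lamL₁ lamU₂ lamL₂ : Fin n → ℝ),
      DF z₁ lamU₁ lamL₁ → DF z₂ lamU₂ lamL₂ →
      ∀ t : ℝ, t ∈ Set.Icc (0 : ℝ) 1 →
        DF (fun i => t * z₁ i + (1 - t) * z₂ i)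
          (fun i => t * lamU₁ i + (1 - t) * lamU₂ i)
          (fun i => t * lamL₁ i + (1 - t) * lamL₂ i) ∧
        (BddAbove {r : ℝ | ∃ lamU lamL,
            DF (fun i => t * z₁ i + (1 - t) * z₂ i) lamU lamL ∧
            r = g (fun i => t * z₁ i + (1 - t) * z₂ i) lamU lamL} →
          t * g z₁ lamU₁ lamL₁ + (1 - t) * g z₂ lamU₂ lamL₂
            ≤ J (fun i => t * z₁ i + (1 - t) * z₂ i)) :=
  dual_function_J_concave_general n A c₁ c₂ Vlo Vhi DF hDF g hg J hJ
end
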